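/- Let w be the fixed point of the morphism φ from the construction and A_w its monomial algebra over a field k. Then the Lie subalgebra of A_w generated by {1, x₁,…,x₆, y₁,…,y₆} (under the commutator bracket [a,b] = ab − ba) equals all of A_w; i.e., A_w is finitely generated as a Lie algebra. -/

import Mathlib

/-!
If a word `v = v₁v₂` is nonzero in `A_w` while its rotation `v₂v₁` is zero, then
`v = v₁v₂ - v₂v₁ = ⁅v₁, v₂⁆` in `A_w`. Hence, by induction on the length, every monomial lies
in the Lie subalgebra generated by `1` and the letters as soon as every word of length `≥ 2`
has a rotation that is not a factor of `w`.

For the fixed point `w`, every image `phi a` has the shape `xxyy`, so the letter at position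
`m` of `w` is a `y` iff `m ≡ 2, 3 (mod 4)`. A rotation of a factor whose
length is not divisible by `4` breaks this pattern, except for length `2`, where one checks on
the finite list of possible two-letter factors that `ab` and `ba` never both occur. A factor
of length `4m` has a rotation aligned with the blocks, i.e. equal to `phi u`; a rotation of `u`
that is not a factor (or, if `m = 1`, the rotation of `phi a` by `2`, which would force `aa` to
occur) yields a rotation of `phi u` that is not a factor, because an occurrence of `phi z` in
`w` is aligned and can be desubstituted.
-/

/-- The 12-letter alphabet `{x₁,…,x₆,y₁,…,y₆}`: `(false, i)` is `x_{i+1}`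
and `(true, j)` is `y_{j+1}`. -/
abbrev Letter : Type := Bool × Fin 6

/-- The letter `x_{i+1}`. -/
def X (i : Fin 6) : Letter := (false, i)

/-- The letter `y_{j+1}`. -/
def Y (j : Fin 6) : Letter := (true, j)

/-- The morphism of the construction: `x₁↦x₁x₂y₁y₂, x₂↦x₁x₃y₁y₃, x₃↦x₁x₄y₁y₄,
x₄↦x₁x₅y₁y₅, x₅↦x₁x₆y₁y₆, x₆↦x₂x₃y₂y₃, y₁↦x₂x₄y₂y₅, y₂↦x₂x₅y₃y₄, y₃↦x₂x₆y₂y₆,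
y₄↦x₃x₄y₃y₅, y₅↦x₃x₅y₃y₆, y₆↦x₃x₆y₄y₅`. -/
def phi : Letter → List Letter := fun a =>
  [[X 0, X 1, Y 0, Y 1], [X 0, X 2, Y 0, Y 2], [X 0, X 3, Y 0, Y 3],
   [X 0, X 4, Y 0, Y 4], [X 0, X 5, Y 0, Y 5], [X 1, X 2, Y 1, Y 2],
   [X 1, X 3, Y 1, Y 4], [X 1, X 4, Y 2, Y 3], [X 1, X 5, Y 1, Y 5],
   [X 2, X 3, Y 2, Y 4], [X 2, X 4, Y 2, Y 5], [X 2, X 5, Y 3, Y 4]].getD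
    ((if a.1 then 6 else 0) + a.2.val) []

/-- A monoid morphism applied to a word. -/
def applyM {α : Type*} (φ : α → List α) (u : List α) : List α := u.flatMap φ

/-- The block of `len` consecutive letters of `w` starting at position `i`. -/
def toListW {α : Type*} (w : ℕ → α) (i len : ℕ) : List α :=
  (List.range len).map fun k => w (i + k)

/-- `v` is a factor (subword) of the right-infinite word `w`. -/
def IsFactor {α : Type*} (v : List α) (w : ℕ → α) : Prop :=
  ∃ i, toListW w i v.length = v

/-- `v` is a prefix of the right-infinite word `w`. -/
def IsPrefixW {α : Type*} (v : List α) (w : ℕ → α) : Prop :=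
  toListW w 0 v.length = v

/-- `w` is the fixed point `φ^ω(x₁)` of the (4-uniform) morphism `phi`:
for every `n`, `phi^n(x₁)` (a word of length `4^n`) is a prefix of `w`. -/
def IsFixedPointWord (w : ℕ → Letter) : Prop :=
  ∀ n : ℕ, toListW w 0 (4 ^ n) = (applyM phi)^[n] [X 0]

/-- The relation on the free algebra identifying with `0` every monomial
corresponding to a finite word that is not a factor of `w`. -/
def relOf (k : Type*) [Field k] (w : ℕ → Letter) :
    FreeAlgebra k Letter → FreeAlgebra k Letter → Prop :=
  fun p q => q = 0 ∧ ∃ v : List Letter, ¬ IsFactor v w ∧ p = (v.map (FreeAlgebra.ι k)).prod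

/-- The monomial algebra `A_w = k{Σ}/I`. -/
abbrev Aw (k : Type*) [Field k] (w : ℕ → Letter) : Type _ := RingQuot (relOf k w)

attribute [local instance 100] LieRing.ofAssociativeRing


section Words

variable {α : Type*}

theorem List.getD_rotate (l : List α) (d : α) {n j : ℕ} (hj : j < l.length) :
    (l.rotate n).getD j d = l.getD ((j + n) % l.length) d := by
  rw [List.getD_eq_getElem _ _ (by simpa using hj), List.getElem_rotate,
    List.getD_eq_getElem]

theorem length_toListW (w : ℕ → α) (i n : ℕ) : (toListW w i n).length = n := by
  simp [toListW]

theorem getD_toListW (w : ℕ → α) (d : α) {i n k : ℕ} (hk : k < n) :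
    (toListW w i n).getD k d = w (i + k) := by
  simp [toListW, hk]

theorem toListW_add (w : ℕ → α) (i m n : ℕ) :
    toListW w i (m + n) = toListW w i m ++ toListW w (i + m) n := by
  simp only [toListW, List.range_add, List.map_append, List.map_map, Function.comp_def,
    Nat.add_assoc]

theorem toListW_eq_iff (w : ℕ → α) (d : α) {i : ℕ} {v : List α} :
    toListW w i v.length = v ↔ ∀ j < v.length, w (i + j) = v.getD j d := by
  constructor
  · rintro h j hj
    rw [← getD_toListW w d hj, h]
  · intro h
    refine List.ext_getElem (length_toListW w i _) fun j hj _ => ?_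
    rw [← List.getD_eq_getElem v d, ← h j (by simpa [length_toListW] using hj),
      ← getD_toListW w d (by simpa [length_toListW] using hj), List.getD_eq_getElem]

theorem apply_add_of_rotate {w : ℕ → α} {v : List α} {i p k j : ℕ}
    (hv : toListW w i v.length = v) (hr : toListW w p (v.rotate k).length = v.rotate k)
    (hj : j < v.length) : w (p + j) = w (i + (j + k) % v.length) := by
  rw [(toListW_eq_iff w (w 0)).1 hr j (by simpa using hj), List.getD_rotate _ _ hj,
    (toListW_eq_iff w (w 0)).1 hv _ (Nat.mod_lt _ (by omega))]

theorem apply_add_of_rotate_of_lt {w : ℕ → α} {v : List α} {i p k j : ℕ}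
    (hv : toListW w i v.length = v) (hr : toListW w p (v.rotate k).length = v.rotate k)
    (h : j + k < v.length) : w (p + j) = w (i + (j + k)) := by
  rw [apply_add_of_rotate hv hr (by omega), Nat.mod_eq_of_lt h]

theorem apply_add_of_rotate_of_le {w : ℕ → α} {v : List α} {i p k j : ℕ}
    (hv : toListW w i v.length = v) (hr : toListW w p (v.rotate k).length = v.rotate k)
    (hj : j < v.length) (hk : k ≤ v.length) (h : v.length ≤ j + k) :
    w (p + j) = w (i + (j + k - v.length)) := by
  rw [apply_add_of_rotate hv hr hj, Nat.mod_eq_sub_mod h, Nat.mod_eq_of_lt (by omega)]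

end Words

section UniformMorphism

variable {α : Type*} {φ : α → List α} {d : ℕ}

theorem applyM_cons (φ : α → List α) (a : α) (l : List α) :
    applyM φ (a :: l) = φ a ++ applyM φ l := rfl

theorem applyM_append (φ : α → List α) (l l' : List α) :
    applyM φ (l ++ l') = applyM φ l ++ applyM φ l' := List.flatMap_append

theorem length_applyM (hφ : ∀ a, (φ a).length = d) (z : List α) :
    (applyM φ z).length = d * z.length := by
  induction z with
  | nil => rfl
  | cons a l ih => rw [applyM_cons, List.length_append, ih, hφ, List.length_cons]; ring

theorem getD_applyM (hφ : ∀ a, (φ a).length = d) (e : α) :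
    ∀ (z : List α) {j r : ℕ}, j < z.length → r < d →
      (applyM φ z).getD (d * j + r) e = (φ (z.getD j e)).getD r e
  | [], _, _, hj, _ => absurd hj (Nat.not_lt_zero _)
  | a :: l, 0, r, _, hr => by
    rw [applyM_cons, List.getD_append _ _ _ _ (by rw [hφ]; omega)]
    simp
  | a :: l, j + 1, r, hj, hr => by
    rw [applyM_cons, List.getD_append_right _ _ _ _ (by rw [hφ]; nlinarith), hφ,
      show d * (j + 1) + r - d = d * j + r by rw [Nat.mul_succ]; omega,
      getD_applyM hφ e l (by simpa using hj) hr]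
    simp

theorem applyM_injective (hφ : ∀ a, (φ a).length = d) (hd : 0 < d)
    (hinj : Function.Injective φ) : Function.Injective (applyM φ)
  | [], [], _ => rfl
  | [], b :: l, h | b :: l, [], h => by
    have := congrArg List.length h
    simp only [length_applyM hφ, List.length_cons, List.length_nil] at this
    nlinarith
  | a :: l, b :: l', h => by
    obtain ⟨hab, hll⟩ := List.append_inj h (by rw [hφ, hφ])
    rw [hinj hab, applyM_injective hφ hd hinj hll]

theorem applyM_rotate_one (hφ : ∀ a, (φ a).length = d) :
    ∀ z : List α, applyM φ (z.rotate 1) = (applyM φ z).rotate d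
  | [] => by simp [applyM]
  | a :: l => by
    rw [List.rotate_cons_succ, List.rotate_zero, applyM_append, applyM_cons φ a l, ← hφ a,
      List.rotate_append_length_eq]
    simp [applyM]

theorem applyM_rotate (hφ : ∀ a, (φ a).length = d) (z : List α) :
    ∀ t : ℕ, applyM φ (z.rotate t) = (applyM φ z).rotate (d * t)
  | 0 => by simp
  | t + 1 => by
    rw [← List.rotate_rotate, applyM_rotate_one hφ, applyM_rotate hφ z t, List.rotate_rotate,
      Nat.mul_succ]

end UniformMorphism

theorem phi_length : ∀ a : Letter, (phi a).length = 4 := by decide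

theorem phi_injective : Function.Injective phi := by
  unfold Function.Injective
  decide

theorem phi_take_two_injective : ∀ a b : Letter, (phi a).take 2 = (phi b).take 2 → a = b := by
  decide

theorem phi_drop_two_injective : ∀ a b : Letter, (phi a).drop 2 = (phi b).drop 2 → a = b := by
  decide

theorem fst_getD_phi :
    ∀ (a : Letter) (r : Fin 4), ((phi a).getD r (X 0)).1 = true ↔ 2 ≤ r.val := by
  decide

/-- Contains the pairs of adjacent letters inside each `phi a` and is closed under
`(a, b) ↦ (last letter of phi a, first letter of phi b)`, so it contains every
length-2 factor of the fixed point. -/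
def admissiblePairs : List (Letter × Letter) :=
  [(X 0, X 1), (X 0, X 2), (X 0, X 3), (X 0, X 4), (X 0, X 5), (X 1, X 2), (X 1, X 3),
   (X 1, X 4), (X 1, X 5), (X 1, Y 0), (X 2, X 3), (X 2, X 4), (X 2, X 5), (X 2, Y 0),
   (X 2, Y 1), (X 3, Y 0), (X 3, Y 1), (X 3, Y 2), (X 4, Y 0), (X 4, Y 2), (X 5, Y 0),
   (X 5, Y 1), (X 5, Y 3), (Y 0, Y 1), (Y 0, Y 2), (Y 0, Y 3), (Y 0, Y 4), (Y 0, Y 5),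
   (Y 1, X 0), (Y 1, X 1), (Y 1, Y 2), (Y 1, Y 4), (Y 1, Y 5), (Y 2, X 0), (Y 2, X 1),
   (Y 2, X 2), (Y 2, Y 3), (Y 2, Y 4), (Y 2, Y 5), (Y 3, X 0), (Y 3, X 1), (Y 3, X 2),
   (Y 3, Y 4), (Y 4, X 0), (Y 4, X 1), (Y 4, X 2), (Y 5, X 0), (Y 5, X 1), (Y 5, X 2)]

theorem getD_phi_mem_admissiblePairs : ∀ (a : Letter) (r : Fin 3),
    ((phi a).getD r (X 0), (phi a).getD (r + 1) (X 0)) ∈ admissiblePairs := by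
  decide

theorem getD_phi_three_zero_mem_admissiblePairs : ∀ a b : Letter, (a, b) ∈ admissiblePairs →
    ((phi a).getD 3 (X 0), (phi b).getD 0 (X 0)) ∈ admissiblePairs := by
  decide

theorem admissiblePairs_asymm : ∀ a b : Letter, (a, b) ∈ admissiblePairs →
    (b, a) ∉ admissiblePairs := by
  decide

namespace IsFixedPointWord

variable {w : ℕ → Letter}

theorem apply_four_mul_add (hw : IsFixedPointWord w) (j : ℕ) {r : ℕ} (hr : r < 4) :
    w (4 * j + r) = (phi (w j)).getD r (X 0) := by
  have hj : j < 4 ^ j := Nat.lt_pow_self (by norm_num)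
  have hstep : toListW w 0 (4 ^ (j + 1)) = applyM phi (toListW w 0 (4 ^ j)) := by
    rw [hw, hw, Function.iterate_succ_apply']
  have h := congrArg (·.getD (4 * j + r) (X 0)) hstep
  rwa [getD_toListW _ _ (by rw [pow_succ]; omega), Nat.zero_add,
    getD_applyM phi_length _ _ (by rwa [length_toListW]) hr, getD_toListW _ _ hj,
    Nat.zero_add] at h

theorem fst_eq_true_iff (hw : IsFixedPointWord w) (m : ℕ) : (w m).1 = true ↔ 2 ≤ m % 4 := by
  have h := hw.apply_four_mul_add (m / 4) (Nat.mod_lt m (by norm_num))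
  rw [Nat.div_add_mod] at h
  rw [h]
  exact fst_getD_phi _ ⟨m % 4, Nat.mod_lt m (by norm_num)⟩

theorem mod_four_iff_of_eq (hw : IsFixedPointWord w) {a b : ℕ} (h : w a = w b) :
    2 ≤ a % 4 ↔ 2 ≤ b % 4 := by
  rw [← hw.fst_eq_true_iff, ← hw.fst_eq_true_iff, h]

theorem toListW_four_mul (hw : IsFixedPointWord w) (q m : ℕ) :
    toListW w (4 * q) (4 * m) = applyM phi (toListW w q m) := by
  have hlen : (applyM phi (toListW w q m)).length = 4 * m := by
    rw [length_applyM phi_length, length_toListW]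
  rw [← hlen, toListW_eq_iff w (X 0)]
  intro j hj
  rw [hlen] at hj
  have hr : j % 4 < 4 := Nat.mod_lt j (by norm_num)
  rw [← Nat.div_add_mod j 4, getD_applyM phi_length _ _ (by rw [length_toListW]; omega) hr,
    getD_toListW _ _ (by omega), ← hw.apply_four_mul_add _ hr]
  ring_nf

theorem toListW_four_mul_four (hw : IsFixedPointWord w) (j : ℕ) :
    toListW w (4 * j) 4 = phi (w j) := by
  simpa [toListW, applyM] using hw.toListW_four_mul j 1

theorem pair_mem_admissiblePairs (hw : IsFixedPointWord w) (j : ℕ) :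
    (w j, w (j + 1)) ∈ admissiblePairs := by
  induction j using Nat.strong_induction_on with
  | _ j ih =>
  obtain ⟨q, r, hr, rfl⟩ : ∃ q r, r < 4 ∧ j = 4 * q + r :=
    ⟨j / 4, j % 4, Nat.mod_lt j (by norm_num), (Nat.div_add_mod j 4).symm⟩
  rcases Nat.lt_or_ge r 3 with h3 | h3
  · rw [hw.apply_four_mul_add q hr, show 4 * q + r + 1 = 4 * q + (r + 1) by ring,
      hw.apply_four_mul_add q (by omega : r + 1 < 4)]
    exact getD_phi_mem_admissiblePairs (w q) ⟨r, h3⟩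
  · obtain rfl : r = 3 := by omega
    rw [hw.apply_four_mul_add q hr, show 4 * q + 3 + 1 = 4 * (q + 1) + 0 by ring,
      hw.apply_four_mul_add (q + 1) (by norm_num : 0 < 4)]
    exact getD_phi_three_zero_mem_admissiblePairs _ _ (ih q (by omega))

theorem mem_admissiblePairs_of_isFactor (hw : IsFixedPointWord w) {a b : Letter}
    (h : IsFactor [a, b] w) : (a, b) ∈ admissiblePairs := by
  obtain ⟨i, hi⟩ := h
  simp only [toListW, List.length_cons, List.length_nil, List.range_succ, List.range_zero,
    List.nil_append, List.map_cons, List.map_nil, List.cons_append, List.cons.injEq] at hi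
  obtain ⟨rfl, rfl, -⟩ := hi
  exact hw.pair_mem_admissiblePairs i

theorem isFactor_of_isFactor_applyM (hw : IsFixedPointWord w) {z : List Letter}
    (h : IsFactor (applyM phi z) w) : IsFactor z w := by
  obtain ⟨p, hp⟩ := h
  rcases z with _ | ⟨a, l⟩
  · exact ⟨0, rfl⟩
  rw [length_applyM phi_length] at hp
  have hfst : ∀ r < 2, ¬ 2 ≤ (p + r) % 4 := by
    intro r hr
    have hwr := getD_toListW w (X 0) (i := p) (show r < 4 * (a :: l).length by simp; omega)
    have hblock := getD_applyM phi_length (X 0) (a :: l) (j := 0) (by simp) (by omega : r < 4)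
    rw [hp] at hwr
    rw [Nat.mul_zero, Nat.zero_add, List.getD_cons_zero] at hblock
    rw [← hw.fst_eq_true_iff, ← hwr, hblock]
    exact fun h => absurd ((fst_getD_phi a ⟨r, by omega⟩).1 h) (by simpa using hr)
  have hp4 : p = 4 * (p / 4) := by have := hfst 0; have := hfst 1; omega
  rw [hp4, hw.toListW_four_mul] at hp
  exact ⟨p / 4, applyM_injective phi_length (by norm_num) phi_injective hp⟩

theorem not_isFactor_phi_rotate_two (hw : IsFixedPointWord w) (a : Letter) :
    ¬ IsFactor ((phi a).rotate 2) w := by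
  rintro ⟨p, hp⟩
  rw [List.length_rotate, phi_length] at hp
  have hfst : ∀ j < 4, (2 ≤ (p + j) % 4 ↔ 2 ≤ (j + 2) % 4) := by
    intro j hj
    rw [← hw.fst_eq_true_iff, ← getD_toListW w (X 0) hj, hp,
      List.getD_rotate _ _ (by rw [phi_length]; exact hj), phi_length]
    exact fst_getD_phi a ⟨(j + 2) % 4, Nat.mod_lt _ (by norm_num)⟩
  have hp4 : p = 4 * (p / 4) + 2 := by
    have := hfst 0; have := hfst 1; have := hfst 2; omega
  have hdrop : (phi (w (p / 4))).drop 2 = toListW w (4 * (p / 4) + 2) 2 := by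
    rw [← hw.toListW_four_mul_four, toListW_add w _ 2 2, List.drop_left' (length_toListW _ _ _)]
  have htake : (phi (w (p / 4 + 1))).take 2 = toListW w (4 * (p / 4 + 1)) 2 := by
    rw [← hw.toListW_four_mul_four, toListW_add w _ 2 2, List.take_left' (length_toListW _ _ _)]
  rw [hp4, toListW_add w _ 2 2, show 4 * (p / 4) + 2 + 2 = 4 * (p / 4 + 1) by ring,
    List.rotate_eq_drop_append_take (by rw [phi_length]; omega)] at hp
  obtain ⟨hleft, hright⟩ := List.append_inj hp (by simp [length_toListW, phi_length])
  have h₁ := phi_drop_two_injective _ _ (hdrop.trans hleft)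
  have h₂ := phi_take_two_injective _ _ (htake.trans hright)
  have hpair := hw.pair_mem_admissiblePairs (p / 4)
  rw [h₁, h₂] at hpair
  exact admissiblePairs_asymm a a hpair hpair

theorem exists_not_isFactor_rotate_of_length_eq_two (hw : IsFixedPointWord w)
    {v : List Letter} (hv : v.length = 2) : ∃ n, ¬ IsFactor (v.rotate n) w := by
  match v, hv with
  | [a, b], _ =>
    by_contra! h
    have hab := hw.mem_admissiblePairs_of_isFactor (h 0)
    have hba := hw.mem_admissiblePairs_of_isFactor (h 1)
    exact admissiblePairs_asymm a b hab hba

theorem exists_not_isFactor_rotate_of_not_four_dvd (hw : IsFixedPointWord w)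
    {v : List Letter} (h3 : 3 ≤ v.length) (h4 : ¬ 4 ∣ v.length) :
    ∃ n, ¬ IsFactor (v.rotate n) w := by
  by_contra! h
  obtain ⟨i, hi⟩ := h 0
  rw [List.rotate_zero] at hi
  obtain ⟨p, hp⟩ := h 1
  obtain ⟨q, hq⟩ := h 2
  have p₀ := hw.mod_four_iff_of_eq (apply_add_of_rotate_of_lt hi hp (j := 0) (by omega))
  have p₁ := hw.mod_four_iff_of_eq (apply_add_of_rotate_of_lt hi hp (j := 1) (by omega))
  have p₂ := hw.mod_four_iff_of_eq
    (apply_add_of_rotate_of_le hi hp (j := v.length - 1) (by omega) (by omega) (by omega))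
  have q₀ := hw.mod_four_iff_of_eq (apply_add_of_rotate_of_lt hi hq (j := 0) (by omega))
  have q₁ := hw.mod_four_iff_of_eq
    (apply_add_of_rotate_of_le hi hq (j := v.length - 2) (by omega) (by omega) (by omega))
  have q₂ := hw.mod_four_iff_of_eq
    (apply_add_of_rotate_of_le hi hq (j := v.length - 1) (by omega) (by omega) (by omega))
  omega

theorem exists_rotate_eq_applyM (hw : IsFixedPointWord w) {v : List Letter}
    (h0 : 0 < v.length) (h4 : 4 ∣ v.length) (hv : ∀ n, IsFactor (v.rotate n) w) :
    ∃ k u, v.rotate k = applyM phi u ∧ 4 * u.length = v.length := by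
  obtain ⟨i, hi⟩ := hv 0
  rw [List.rotate_zero] at hi
  set k := (4 - i % 4) % 4 with hk
  obtain ⟨p, hp⟩ := hv k
  have hphase : ∀ j < 2, (2 ≤ (p + j) % 4 ↔ 2 ≤ (i + k + j) % 4) := by
    intro j hj
    rcases Nat.lt_or_ge (j + k) v.length with h | h
    · have := hw.mod_four_iff_of_eq (apply_add_of_rotate_of_lt hi hp h)
      omega
    · have := hw.mod_four_iff_of_eq (apply_add_of_rotate_of_le hi hp (by omega) (by omega) h)
      omega
  have hp4 : p = 4 * (p / 4) := by
    have := hphase 0 (by norm_num); have := hphase 1 (by norm_num); omega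
  refine ⟨k, toListW w (p / 4) (v.length / 4), ?_, by rw [length_toListW]; omega⟩
  rw [← hw.toListW_four_mul, ← hp4, ← hp, List.length_rotate, Nat.mul_div_cancel' h4]

theorem exists_not_isFactor_rotate_applyM (hw : IsFixedPointWord w) {u : List Letter}
    (hu : u ≠ []) (ih : 2 ≤ u.length → ∃ t, ¬ IsFactor (u.rotate t) w) :
    ∃ s, ¬ IsFactor ((applyM phi u).rotate s) w := by
  rcases u with _ | ⟨a, _ | ⟨b, l⟩⟩
  · contradiction
  · exact ⟨2, by simpa [applyM] using hw.not_isFactor_phi_rotate_two a⟩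
  · obtain ⟨t, ht⟩ := ih (by simp)
    refine ⟨4 * t, fun h => ht (hw.isFactor_of_isFactor_applyM ?_)⟩
    rwa [applyM_rotate phi_length]

theorem exists_not_isFactor_rotate (hw : IsFixedPointWord w) {v : List Letter}
    (hv : 2 ≤ v.length) : ∃ n, ¬ IsFactor (v.rotate n) w := by
  induction hn : v.length using Nat.strong_induction_on generalizing v with
  | _ n ih =>
  rcases (by omega : n = 2 ∨ (3 ≤ n ∧ ¬ 4 ∣ n) ∨ 4 ∣ n) with h2 | ⟨h3, h4⟩ | h4
  · exact hw.exists_not_isFactor_rotate_of_length_eq_two (hn.trans h2)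
  · exact hw.exists_not_isFactor_rotate_of_not_four_dvd (hn ▸ h3) (hn ▸ h4)
  · by_contra! hfac
    obtain ⟨k, u, hku, hlen⟩ := hw.exists_rotate_eq_applyM (by omega) (hn ▸ h4) hfac
    obtain ⟨s, hs⟩ := hw.exists_not_isFactor_rotate_applyM (by rintro rfl; simp at hlen; omega)
      fun hu => ih u.length (by omega) hu rfl
    rw [← hku, List.rotate_rotate] at hs
    exact hs (hfac (k + s))

end IsFixedPointWord

theorem FreeAlgebra.span_range_prod_map_ι (R X : Type*) [CommSemiring R] :
    Submodule.span R (Set.range fun v : List X => (v.map (FreeAlgebra.ι R)).prod) = ⊤ := by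
  have hrange : (Set.range fun v : List X => (v.map (FreeAlgebra.ι R)).prod) =
      Submonoid.closure (Set.range (FreeAlgebra.ι R : X → FreeAlgebra R X)) := by
    rw [← FreeMonoid.mrange_lift, MonoidHom.coe_mrange,
      ← FreeMonoid.ofList.surjective.range_comp, Function.comp_def]
    simp only [FreeMonoid.lift_ofList]
  rw [hrange, ← Algebra.adjoin_eq_span, FreeAlgebra.adjoin_range_ι, Algebra.top_toSubmodule]

namespace Aw

variable (k : Type*) [Field k] (w : ℕ → Letter)

def ofWord (v : List Letter) : Aw k w :=
  RingQuot.mkAlgHom k (relOf k w) (v.map (FreeAlgebra.ι k)).prod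

theorem ofWord_append (u v : List Letter) :
    ofWord k w (u ++ v) = ofWord k w u * ofWord k w v := by
  simp [ofWord]

theorem ofWord_eq_zero {v : List Letter} (hv : ¬ IsFactor v w) : ofWord k w v = 0 :=
  (RingQuot.mkAlgHom_rel k ⟨rfl, v, hv, rfl⟩).trans (map_zero _)

theorem span_range_ofWord : Submodule.span k (Set.range (ofWord k w)) = ⊤ := by
  rw [show Set.range (ofWord k w) = (RingQuot.mkAlgHom k (relOf k w)).toLinearMap ''
      Set.range fun v : List Letter => (v.map (FreeAlgebra.ι k)).prod by
    rw [← Set.range_comp]; rfl, ← Submodule.map_span, FreeAlgebra.span_range_prod_map_ι,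
    Submodule.map_top, LinearMap.range_eq_top]
  exact RingQuot.mkAlgHom_surjective k (relOf k w)

theorem ofWord_eq_lie {v : List Letter} {n : ℕ}
    (hn : ¬ IsFactor (v.drop n ++ v.take n) w) :
    ofWord k w v = ⁅ofWord k w (v.take n), ofWord k w (v.drop n)⁆ := by
  rw [Ring.lie_def, ← ofWord_append, ← ofWord_append, List.take_append_drop,
    ofWord_eq_zero k w hn, sub_zero]

variable {k w}

theorem ofWord_mem_lieSpan
    (hrot : ∀ v : List Letter, 2 ≤ v.length → ∃ n, ¬ IsFactor (v.rotate n) w)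
    (v : List Letter) :
    ofWord k w v ∈ LieSubalgebra.lieSpan k (Aw k w)
      (insert 1 (Set.range fun a : Letter =>
        RingQuot.mkAlgHom k (relOf k w) (FreeAlgebra.ι k a))) := by
  induction hn : v.length using Nat.strong_induction_on generalizing v with
  | _ n ih =>
  rcases v with _ | ⟨a, _ | ⟨b, l⟩⟩
  · exact LieSubalgebra.subset_lieSpan (by simp [ofWord])
  · exact LieSubalgebra.subset_lieSpan (by simp [ofWord])
  set v := a :: b :: l
  by_cases hfac : IsFactor v w
  · obtain ⟨m, hm⟩ := hrot v (by simp [v])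
    rw [List.rotate_eq_drop_append_take_mod] at hm
    have hpos : 0 < m % v.length := by
      refine Nat.pos_of_ne_zero fun h0 => hm ?_
      simpa [h0] using hfac
    have hlt : m % v.length < v.length := Nat.mod_lt _ (by simp [v])
    rw [ofWord_eq_lie k w hm]
    exact LieSubalgebra.lie_mem _ (ih _ (by rw [List.length_take]; omega) _ rfl)
      (ih _ (by rw [List.length_drop]; omega) _ rfl)
  · rw [ofWord_eq_zero k w hfac]
    exact LieSubalgebra.zero_mem _

variable (k) in
theorem lieSpan_eq_top_of_exists_not_isFactor_rotate
    (hrot : ∀ v : List Letter, 2 ≤ v.length → ∃ n, ¬ IsFactor (v.rotate n) w) :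
    LieSubalgebra.lieSpan k (Aw k w)
      (insert 1 (Set.range fun a : Letter =>
        RingQuot.mkAlgHom k (relOf k w) (FreeAlgebra.ι k a))) = ⊤ := by
  rw [eq_top_iff, ← LieSubalgebra.toSubmodule_le_toSubmodule, LieSubalgebra.top_toSubmodule,
    ← span_range_ofWord k w, Submodule.span_le]
  rintro _ ⟨v, rfl⟩
  exact ofWord_mem_lieSpan hrot v

end Aw

theorem stmt19 (k : Type*) [Field k] (w : ℕ → Letter) (hw : IsFixedPointWord w) :
    LieSubalgebra.lieSpan k (Aw k w)
      (insert 1 (Set.range fun a : Letter =>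
        RingQuot.mkAlgHom k (relOf k w) (FreeAlgebra.ι k a))) = ⊤ :=
  Aw.lieSpan_eq_top_of_exists_not_isFactor_rotate k fun _ => hw.exists_not_isFactor_rotate
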